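/- Consider the embedded M/G/1 queue chain: let (a_j)_{j≥0} be nonnegative reals with Σ_{j≥0} a_j = 1 and ρ := Σ_{j≥0} j·a_j < 1, and let P be the Markov kernel on ℕ given by P(0,y) = a_y, and for x ≥ 1, P(x,y) = a_{y−x+1} if y ≥ x−1 and P(x,y) = 0 otherwise. Let τ_0 = inf{n ≥ 1 : X_n = 0} be the first return time to 0. Then for every x ≥ 1, E_x[τ_0] = x/(1−ρ) < ∞, and E_0[τ_0] = 1/(1−ρ). -/

import Mathlib

/-!
From a state `y ≥ 1` the chain moves to `y - 1 + A` with `E[A] = ρ`, so on the event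
`{τ₀ > n}` (for `n ≥ 1`) the position drops by `1 - ρ` in mean:
`E[X_{n+1}; τ₀ > n + 1] + (1 - ρ) P(τ₀ > n) = E[X_n; τ₀ > n]`.
Telescoping gives `(1 - ρ) ∑_{n ≥ 1} P(τ₀ > n) = E_x[X_1] - lim_N E[X_N; τ₀ > N]`. The limit
vanishes by dominated convergence: `X_N` on `{τ₀ > N}` is at most `X_1` plus the sum of the jumps
plus one before `τ₀`, a bound whose expectation `E_x[X_1] + ρ ∑_{n ≥ 1} P(τ₀ > n)` is finite by
the telescoped identity. As `E_x[τ₀] = ∑_{n ≥ 0} P(τ₀ > n)` and `E_x[X_1]` is `x - 1 + ρ` for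
`x ≥ 1` and `ρ` for `x = 0`, the two formulas follow.
-/

open MeasureTheory ProbabilityTheory Filter
open scoped ENNReal ENat

noncomputable section

/-- `μ` is the family of laws of the canonical Markov chain with kernel `K`. -/
structure IsMarkovChain (K : Kernel ℕ ℕ) (μ : ℕ → Measure (ℕ → ℕ)) : Prop where
  isProb : ∀ x, IsProbabilityMeasure (μ x)
  init : ∀ x, (μ x).map (fun ω => ω 0) = Measure.dirac x
  markov : ∀ (x : ℕ) (n : ℕ) (g : (ℕ → ℕ) → ℝ≥0∞) (f : ℕ → ℝ≥0∞),
      Measurable[MeasurableSpace.comap (fun ω (i : Fin (n + 1)) => ω i) inferInstance] g →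
      Measurable f →
      ∫⁻ ω, g ω * f (ω (n + 1)) ∂(μ x) = ∫⁻ ω, g ω * ∫⁻ z, f z ∂(K (ω n)) ∂(μ x)

/-- First return time to `0`: `τ₀ = inf{n ≥ 1 : ω n = 0}` (with `inf ∅ = ⊤`). -/
def ret (ω : ℕ → ℕ) : ℕ∞ :=
  sInf ((fun k : ℕ => (k : ℕ∞)) '' {k | 1 ≤ k ∧ ω k = 0})

open scoped Topology

theorem ENat.toENNReal_eq_tsum_ite_lt (T : ℕ∞) :
    (T : ℝ≥0∞) = ∑' n : ℕ, if (n : ℕ∞) < T then 1 else 0 := by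
  induction T using ENat.recTopCoe with
  | top => simp
  | coe m =>
    rw [tsum_eq_sum (s := Finset.range m) fun n hn => by simpa using hn]
    simp [Finset.filter_true_of_mem fun k hk => Finset.mem_range.mp hk]

theorem mul_eq_tsum_mul_ite (c : ℝ≥0∞) (k : ℕ) (Φ : ℕ → ℝ≥0∞) :
    c * Φ k = ∑' m, (c * if k = m then 1 else 0) * Φ m := by
  simp [mul_ite]

abbrev pastMeasurableSpace (n : ℕ) : MeasurableSpace (ℕ → ℕ) :=
  MeasurableSpace.comap (fun ω (i : Fin (n + 1)) => ω i) inferInstance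

theorem pastMeasurableSpace_le (n : ℕ) :
    pastMeasurableSpace n ≤ (inferInstance : MeasurableSpace (ℕ → ℕ)) :=
  (measurable_pi_lambda _ fun _ => measurable_pi_apply _).comap_le

theorem lt_ret_iff {n : ℕ} {ω : ℕ → ℕ} :
    (n : ℕ∞) < ret ω ↔ ∀ k, 1 ≤ k → k ≤ n → ω k ≠ 0 := by
  rw [← ENat.add_one_le_iff (ENat.natCast_ne_top n), ret, le_sInf_iff, Set.forall_mem_image]
  simp only [Set.mem_ofPred_eq, and_imp]
  refine forall_congr' fun k => ?_
  norm_cast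
  constructor
  · intro h h1 hkn h0
    have := h h1 h0
    omega
  · intro h h1 h0
    by_contra hlt
    exact h h1 (by omega) h0

def survival (n : ℕ) (ω : ℕ → ℕ) : ℝ≥0∞ :=
  if (n : ℕ∞) < ret ω then 1 else 0

theorem coe_ret_eq_tsum_survival (ω : ℕ → ℕ) : (ret ω : ℝ≥0∞) = ∑' n, survival n ω :=
  ENat.toENNReal_eq_tsum_ite_lt _

theorem measurable_survival_past (n : ℕ) : Measurable[pastMeasurableSpace n] (survival n) := by
  have : survival n = (fun v : Fin (n + 1) → ℕ =>
      if ∀ k : Fin (n + 1), 1 ≤ (k : ℕ) → v k ≠ 0 then (1 : ℝ≥0∞) else 0) ∘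
      fun ω i => ω i := by
    ext ω
    simp only [survival, lt_ret_iff, Function.comp_apply, Fin.forall_iff, Nat.lt_succ_iff]
    grind
  rw [this]
  exact (measurable_of_countable _).comp (comap_measurable _)

theorem measurable_survival (n : ℕ) : Measurable (survival n) :=
  (measurable_survival_past n).mono (pastMeasurableSpace_le n) le_rfl

theorem measurable_coe_ret : Measurable fun ω => (ret ω : ℝ≥0∞) := by
  simp_rw [coe_ret_eq_tsum_survival]
  exact Measurable.tsum measurable_survival

theorem survival_zero (ω : ℕ → ℕ) : survival 0 ω = 1 :=
  if_pos (lt_ret_iff.mpr fun _ _ _ => by omega)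

theorem survival_succ_le (n : ℕ) (ω : ℕ → ℕ) : survival (n + 1) ω ≤ survival n ω := by
  have hmono : ((n + 1 : ℕ) : ℕ∞) < ret ω → (n : ℕ∞) < ret ω :=
    (Nat.cast_lt.mpr n.lt_succ_self).trans
  unfold survival
  split_ifs with h h'
  · exact le_rfl
  · exact absurd (hmono h) h'
  · exact zero_le_one
  · exact le_rfl

theorem survival_succ_mul_natCast (n : ℕ) (ω : ℕ → ℕ) :
    survival (n + 1) ω * ω (n + 1) = survival n ω * ω (n + 1) := by
  by_cases h : ω (n + 1) = 0
  · simp [h]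
  · have : (n + 1 : ℕ∞) < ret ω ↔ (n : ℕ∞) < ret ω := by
      rw [← Nat.cast_succ]
      simp only [lt_ret_iff]
      grind
    simp only [survival, Nat.cast_succ, this]

theorem lintegral_ret_eq_tsum (ν : Measure (ℕ → ℕ)) :
    ∫⁻ ω, (ret ω : ℝ≥0∞) ∂ν = ∑' n, ∫⁻ ω, survival n ω ∂ν := by
  simp_rw [coe_ret_eq_tsum_survival]
  exact lintegral_tsum fun n => (measurable_survival n).aemeasurable

theorem survival_succ_mul_le (ω : ℕ → ℕ) (n : ℕ) :
    survival (n + 1) ω * ω (n + 1) ≤ survival 1 ω * ω 1 +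
      ∑ k ∈ Finset.range n, survival (k + 1) ω * ((ω (k + 2) + 1 - ω (k + 1) : ℕ) : ℝ≥0∞) := by
  induction n with
  | zero => simp
  | succ n ih =>
    have hstep : (ω (n + 2) : ℝ≥0∞) ≤ ω (n + 1) + ((ω (n + 2) + 1 - ω (n + 1) : ℕ) : ℝ≥0∞) := by
      norm_cast
      omega
    calc survival (n + 2) ω * ω (n + 2)
        ≤ survival (n + 1) ω * (ω (n + 1) + ((ω (n + 2) + 1 - ω (n + 1) : ℕ) : ℝ≥0∞)) :=
          mul_le_mul' (survival_succ_le _ ω) hstep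
      _ ≤ _ := by
          rw [mul_add, Finset.sum_range_succ, ← add_assoc]
          gcongr

/-- On the support of `K y` the truncated `z + 1 - y` is the exact jump plus one. -/
structure IsSkipFreeWithDrift (K : Kernel ℕ ℕ) (r : ℝ≥0∞) : Prop where
  skipFree : ∀ y, 1 ≤ y → ∀ᵐ z ∂(K y), y ≤ z + 1
  drift : ∀ y, 1 ≤ y → ∫⁻ z, ((z + 1 - y : ℕ) : ℝ≥0∞) ∂(K y) = r

namespace IsSkipFreeWithDrift

variable {K : Kernel ℕ ℕ} [IsMarkovKernel K] {r : ℝ≥0∞}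

theorem lintegral_natCast (hK : IsSkipFreeWithDrift K r) {y : ℕ} (hy : 1 ≤ y) :
    ∫⁻ z, (z : ℝ≥0∞) ∂(K y) = r + (y - 1 : ℕ) := by
  have hz : ∀ᵐ z ∂(K y), ((z : ℕ) : ℝ≥0∞) = ((z + 1 - y : ℕ) : ℝ≥0∞) + (y - 1 : ℕ) := by
    filter_upwards [hK.skipFree y hy] with z hz
    norm_cast
    omega
  rw [lintegral_congr_ae hz, lintegral_add_right _ measurable_const, hK.drift y hy,
    lintegral_const, measure_univ, mul_one]

theorem lintegral_natCast_add_one_sub (hK : IsSkipFreeWithDrift K r) (hr : r ≤ 1) {y : ℕ}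
    (hy : 1 ≤ y) : ∫⁻ z, (z : ℝ≥0∞) ∂(K y) + (1 - r) = y := by
  rw [hK.lintegral_natCast hy, add_right_comm, add_tsub_cancel_of_le hr]
  norm_cast
  omega

end IsSkipFreeWithDrift

namespace IsMarkovChain

variable {K : Kernel ℕ ℕ} {μ : ℕ → Measure (ℕ → ℕ)}

theorem lintegral_comp_zero (hμ : IsMarkovChain K μ) (x : ℕ) (h : ℕ → ℝ≥0∞) :
    ∫⁻ ω, h (ω 0) ∂(μ x) = h x := by
  rw [← lintegral_map (measurable_of_countable h) (measurable_pi_apply 0), hμ.init x,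
    lintegral_dirac]

theorem lintegral_mul_transition (hμ : IsMarkovChain K μ) (x n : ℕ) {g : (ℕ → ℕ) → ℝ≥0∞}
    (hg : Measurable[pastMeasurableSpace n] g) (F : ℕ → ℕ → ℝ≥0∞) :
    ∫⁻ ω, g ω * F (ω n) (ω (n + 1)) ∂(μ x) =
      ∫⁻ ω, g ω * ∫⁻ z, F (ω n) z ∂(K (ω n)) ∂(μ x) := by
  set gm : ℕ → (ℕ → ℕ) → ℝ≥0∞ := fun m ω => g ω * if ω n = m then 1 else 0
  have hgm : ∀ m, Measurable[pastMeasurableSpace n] (gm m) := fun m =>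
    hg.mul ((measurable_of_countable fun v : Fin (n + 1) → ℕ =>
      if v (Fin.last n) = m then (1 : ℝ≥0∞) else 0).comp (comap_measurable _))
  calc ∫⁻ ω, g ω * F (ω n) (ω (n + 1)) ∂(μ x)
      = ∫⁻ ω, ∑' m, gm m ω * F m (ω (n + 1)) ∂(μ x) :=
        lintegral_congr fun ω => mul_eq_tsum_mul_ite (g ω) (ω n) fun m => F m (ω (n + 1))
    _ = ∑' m, ∫⁻ ω, gm m ω * F m (ω (n + 1)) ∂(μ x) :=
        lintegral_tsum fun m => (((hgm m).mono (pastMeasurableSpace_le n) le_rfl).mul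
          ((measurable_of_countable _).comp (measurable_pi_apply _))).aemeasurable
    _ = ∑' m, ∫⁻ ω, gm m ω * ∫⁻ z, F m z ∂(K (ω n)) ∂(μ x) := by
        exact tsum_congr fun m => hμ.markov x n _ _ (hgm m) (measurable_of_countable _)
    _ = ∫⁻ ω, g ω * ∫⁻ z, F (ω n) z ∂(K (ω n)) ∂(μ x) := by
        rw [← lintegral_tsum (f := fun m ω => gm m ω * ∫⁻ z, F m z ∂(K (ω n)))
          fun m => (((hgm m).mono (pastMeasurableSpace_le n) le_rfl).mul
            ((measurable_of_countable fun y => ∫⁻ z, F m z ∂(K y)).comp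
              (measurable_pi_apply n))).aemeasurable]
        exact lintegral_congr fun ω =>
          (mul_eq_tsum_mul_ite (g ω) (ω n) fun m => ∫⁻ z, F m z ∂(K (ω n))).symm

theorem lintegral_ret_eq_one_add (hμ : IsMarkovChain K μ) (x : ℕ) :
    ∫⁻ ω, (ret ω : ℝ≥0∞) ∂(μ x) = 1 + ∑' k, ∫⁻ ω, survival (k + 1) ω ∂(μ x) := by
  have := hμ.isProb x
  rw [lintegral_ret_eq_tsum, tsum_eq_zero_add' ENNReal.summable]
  simp [survival_zero]

theorem lintegral_survival_succ_mul (hμ : IsMarkovChain K μ) (x n : ℕ) :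
    ∫⁻ ω, survival (n + 1) ω * ω (n + 1) ∂(μ x) =
      ∫⁻ ω, survival n ω * ∫⁻ z, (z : ℝ≥0∞) ∂(K (ω n)) ∂(μ x) := by
  simp_rw [survival_succ_mul_natCast]
  exact hμ.lintegral_mul_transition x n (measurable_survival_past n) fun _ z => z

theorem lintegral_survival_one_mul (hμ : IsMarkovChain K μ) (x : ℕ) :
    ∫⁻ ω, survival 1 ω * ω 1 ∂(μ x) = ∫⁻ z, (z : ℝ≥0∞) ∂(K x) := by
  simp only [hμ.lintegral_survival_succ_mul, survival_zero, one_mul]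
  exact hμ.lintegral_comp_zero x fun y => ∫⁻ z, (z : ℝ≥0∞) ∂(K y)

variable {r : ℝ≥0∞}

theorem lintegral_survival_succ_mul_add [IsMarkovKernel K] (hμ : IsMarkovChain K μ)
    (hK : IsSkipFreeWithDrift K r) (hr : r ≤ 1) (x : ℕ) {n : ℕ} (hn : 1 ≤ n) :
    ∫⁻ ω, survival (n + 1) ω * ω (n + 1) ∂(μ x) + (1 - r) * ∫⁻ ω, survival n ω ∂(μ x) =
      ∫⁻ ω, survival n ω * ω n ∂(μ x) := by
  rw [hμ.lintegral_survival_succ_mul, ← lintegral_const_mul _ (measurable_survival n),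
    ← lintegral_add_left (f := fun ω => survival n ω * ∫⁻ z, (z : ℝ≥0∞) ∂(K (ω n)))
      ((measurable_survival n).mul
        ((measurable_of_countable fun y => ∫⁻ z, (z : ℝ≥0∞) ∂(K y)).comp
          (measurable_pi_apply n)))]
  refine lintegral_congr fun ω => ?_
  by_cases h : (n : ℕ∞) < ret ω
  · have hω : 1 ≤ ω n := Nat.one_le_iff_ne_zero.mpr (lt_ret_iff.mp h n hn le_rfl)
    simp only [survival, if_pos h, one_mul, mul_one]
    exact hK.lintegral_natCast_add_one_sub hr hω
  · simp [survival, h]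

theorem lintegral_survival_mul_add_sum [IsMarkovKernel K] (hμ : IsMarkovChain K μ)
    (hK : IsSkipFreeWithDrift K r) (hr : r ≤ 1) (x N : ℕ) :
    ∫⁻ ω, survival (N + 1) ω * ω (N + 1) ∂(μ x) +
        (1 - r) * ∑ k ∈ Finset.range N, ∫⁻ ω, survival (k + 1) ω ∂(μ x) =
      ∫⁻ z, (z : ℝ≥0∞) ∂(K x) := by
  induction N with
  | zero => simpa using hμ.lintegral_survival_one_mul x
  | succ N ih =>
    rw [Finset.sum_range_succ, mul_add, ← add_assoc, add_right_comm,
      hμ.lintegral_survival_succ_mul_add hK hr x (Nat.le_add_left 1 N), ih]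

theorem lintegral_survival_mul_jump (hμ : IsMarkovChain K μ) (hK : IsSkipFreeWithDrift K r)
    (x k : ℕ) :
    ∫⁻ ω, survival (k + 1) ω * ((ω (k + 2) + 1 - ω (k + 1) : ℕ) : ℝ≥0∞) ∂(μ x) =
      r * ∫⁻ ω, survival (k + 1) ω ∂(μ x) := by
  rw [hμ.lintegral_mul_transition x (k + 1) (measurable_survival_past (k + 1))
      fun y z => ((z + 1 - y : ℕ) : ℝ≥0∞), ← lintegral_const_mul _ (measurable_survival _)]
  refine lintegral_congr fun ω => ?_
  by_cases h : ((k + 1 : ℕ) : ℕ∞) < ret ω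
  · have hω : 1 ≤ ω (k + 1) :=
      Nat.one_le_iff_ne_zero.mpr (lt_ret_iff.mp h (k + 1) (by omega) le_rfl)
    simp only [survival, if_pos h, one_mul, mul_one]
    exact hK.drift _ hω
  · simp only [survival, if_neg h, zero_mul, mul_zero]

theorem tendsto_lintegral_survival_mul (hμ : IsMarkovChain K μ) (hK : IsSkipFreeWithDrift K r)
    (hr : r ≠ ⊤) (x : ℕ) (hm : ∫⁻ z, (z : ℝ≥0∞) ∂(K x) ≠ ⊤)
    (hT : ∑' k, ∫⁻ ω, survival (k + 1) ω ∂(μ x) ≠ ⊤) (hret : ∀ᵐ ω ∂(μ x), ret ω ≠ ⊤) :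
    Tendsto (fun N => ∫⁻ ω, survival (N + 1) ω * ω (N + 1) ∂(μ x)) atTop (𝓝 0) := by
  have hjump : ∀ k, Measurable fun ω : ℕ → ℕ =>
      survival (k + 1) ω * ((ω (k + 2) + 1 - ω (k + 1) : ℕ) : ℝ≥0∞) := fun k =>
    (measurable_survival _).mul (by fun_prop)
  have hbound : ∫⁻ ω, survival 1 ω * ω 1 +
      ∑' k, survival (k + 1) ω * ((ω (k + 2) + 1 - ω (k + 1) : ℕ) : ℝ≥0∞) ∂(μ x) ≠ ⊤ := by
    rw [lintegral_add_left (f := fun ω => survival 1 ω * ω 1)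
        ((measurable_survival 1).mul (by fun_prop)),
      lintegral_tsum fun k => (hjump k).aemeasurable,
      tsum_congr (hμ.lintegral_survival_mul_jump hK x), ENNReal.tsum_mul_left,
      hμ.lintegral_survival_one_mul]
    exact ENNReal.add_ne_top.mpr ⟨hm, ENNReal.mul_ne_top hr hT⟩
  have hlim : ∀ᵐ ω ∂(μ x),
      Tendsto (fun N => survival (N + 1) ω * ω (N + 1)) atTop (𝓝 0) := by
    filter_upwards [hret] with ω hω
    lift ret ω to ℕ using hω with T hT
    refine tendsto_atTop_of_eventually_const (i₀ := T) fun N hN => ?_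
    rw [survival, ← hT, if_neg (by exact_mod_cast (show ¬ N + 1 < T by omega)), zero_mul]
  simpa using tendsto_lintegral_of_dominated_convergence _
    (fun N => (measurable_survival _).mul (by fun_prop))
    (fun N => ae_of_all _ fun ω => (survival_succ_mul_le ω N).trans
      (add_le_add le_rfl (ENNReal.sum_le_tsum _))) hbound hlim

theorem mul_lintegral_ret [IsMarkovKernel K] (hμ : IsMarkovChain K μ)
    (hK : IsSkipFreeWithDrift K r) (hr : r < 1) (x : ℕ) (hm : ∫⁻ z, (z : ℝ≥0∞) ∂(K x) ≠ ⊤) :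
    (1 - r) * ∫⁻ ω, (ret ω : ℝ≥0∞) ∂(μ x) = (1 - r) + ∫⁻ z, (z : ℝ≥0∞) ∂(K x) := by
  have hgap : 1 - r ≠ 0 := (tsub_pos_of_lt hr).ne'
  have htel := hμ.lintegral_survival_mul_add_sum hK hr.le x
  have hle : (1 - r) * ∑' k, ∫⁻ ω, survival (k + 1) ω ∂(μ x) ≤ ∫⁻ z, (z : ℝ≥0∞) ∂(K x) := by
    rw [ENNReal.tsum_eq_iSup_nat, ENNReal.mul_iSup]
    exact iSup_le fun N => htel N ▸ le_add_self
  have hT : ∑' k, ∫⁻ ω, survival (k + 1) ω ∂(μ x) ≠ ⊤ := fun h =>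
    hm (top_unique (ENNReal.mul_top hgap ▸ h ▸ hle))
  have hret := hμ.lintegral_ret_eq_one_add x
  have hfin : ∀ᵐ ω ∂(μ x), ret ω ≠ ⊤ := by
    filter_upwards [ae_lt_top' measurable_coe_ret.aemeasurable
      (hret ▸ ENNReal.add_ne_top.mpr ⟨ENNReal.one_ne_top, hT⟩)] with ω hω
    exact (by simpa using hω : ret ω < ⊤).ne
  have hlim := (hμ.tendsto_lintegral_survival_mul hK (ne_top_of_lt hr) x hm hT hfin).add
    (ENNReal.Tendsto.const_mul (a := 1 - r)
      (ENNReal.tendsto_nat_tsum fun k => ∫⁻ ω, survival (k + 1) ω ∂(μ x))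
      (Or.inr (ENNReal.sub_ne_top ENNReal.one_ne_top)))
  simp only [htel, zero_add, tendsto_const_nhds_iff] at hlim
  rw [hret, mul_add, mul_one, ← hlim]

theorem lintegral_ret_of_one_le [IsMarkovKernel K] (hμ : IsMarkovChain K μ)
    (hK : IsSkipFreeWithDrift K r) (hr : r < 1) {x : ℕ} (hx : 1 ≤ x) :
    ∫⁻ ω, (ret ω : ℝ≥0∞) ∂(μ x) = x / (1 - r) := by
  have hm : ∫⁻ z, (z : ℝ≥0∞) ∂(K x) ≠ ⊤ := by
    rw [hK.lintegral_natCast hx]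
    exact ENNReal.add_ne_top.mpr ⟨ne_top_of_lt hr, ENNReal.natCast_ne_top _⟩
  rw [ENNReal.eq_div_iff (tsub_pos_of_lt hr).ne' (ENNReal.sub_ne_top ENNReal.one_ne_top),
    hμ.mul_lintegral_ret hK hr x hm, add_comm, hK.lintegral_natCast_add_one_sub hr.le hx]

theorem lintegral_ret_zero [IsMarkovKernel K] (hμ : IsMarkovChain K μ)
    (hK : IsSkipFreeWithDrift K r) (hr : r < 1) (h0 : ∫⁻ z, (z : ℝ≥0∞) ∂(K 0) = r) :
    ∫⁻ ω, (ret ω : ℝ≥0∞) ∂(μ 0) = 1 / (1 - r) := by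
  rw [ENNReal.eq_div_iff (tsub_pos_of_lt hr).ne' (ENNReal.sub_ne_top ENNReal.one_ne_top),
    hμ.mul_lintegral_ret hK hr 0 (h0 ▸ ne_top_of_lt hr), h0, tsub_add_cancel_of_le hr.le]

end IsMarkovChain

section MG1

variable {a : ℕ → ℝ} {P : Kernel ℕ ℕ}

theorem tsum_natCast_mul_ofReal (ha : ∀ j, 0 ≤ a j)
    (hsummable : Summable fun j : ℕ => (j : ℝ) * a j) :
    ∑' j : ℕ, (j : ℝ≥0∞) * ENNReal.ofReal (a j) = ENNReal.ofReal (∑' j : ℕ, (j : ℝ) * a j) := by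
  rw [ENNReal.ofReal_tsum_of_nonneg (fun j => mul_nonneg j.cast_nonneg (ha j)) hsummable]
  refine tsum_congr fun j => ?_
  rw [ENNReal.ofReal_mul j.cast_nonneg, ENNReal.ofReal_natCast]

theorem lintegral_mg1_of_one_le
    (hP : ∀ x : ℕ, 1 ≤ x → ∀ y : ℕ,
      P x {y} = if x ≤ y + 1 then ENNReal.ofReal (a (y + 1 - x)) else 0)
    {y : ℕ} (hy : 1 ≤ y) (f : ℕ → ℝ≥0∞) :
    ∫⁻ z, f z ∂(P y) = ∑' j, f (j + (y - 1)) * ENNReal.ofReal (a j) := by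
  rw [lintegral_countable',
    ← ENNReal.summable.sum_add_tsum_nat_add' (f := fun z => f z * P y {z}) (k := y - 1),
    Finset.sum_eq_zero fun z hz => ?_, zero_add]
  · refine tsum_congr fun j => ?_
    rw [hP y hy, if_pos (by omega), show j + (y - 1) + 1 - y = j by omega]
  · rw [hP y hy, if_neg (by rw [Finset.mem_range] at hz; omega), mul_zero]

theorem isSkipFreeWithDrift_mg1 (ha : ∀ j, 0 ≤ a j)
    (hsummable : Summable fun j : ℕ => (j : ℝ) * a j)
    (hP : ∀ x : ℕ, 1 ≤ x → ∀ y : ℕ,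
      P x {y} = if x ≤ y + 1 then ENNReal.ofReal (a (y + 1 - x)) else 0) :
    IsSkipFreeWithDrift P (ENNReal.ofReal (∑' j : ℕ, (j : ℝ) * a j)) where
  skipFree y hy := ae_iff_of_countable.mpr fun z hz => by
    rw [hP y hy] at hz
    by_contra h
    exact hz (if_neg h)
  drift y hy := by
    rw [lintegral_mg1_of_one_le hP hy, ← tsum_natCast_mul_ofReal ha hsummable]
    refine tsum_congr fun j => ?_
    rw [show j + (y - 1) + 1 - y = j by omega]

theorem lintegral_mg1_zero (ha : ∀ j, 0 ≤ a j)
    (hsummable : Summable fun j : ℕ => (j : ℝ) * a j)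
    (hP0 : ∀ y : ℕ, P 0 {y} = ENNReal.ofReal (a y)) :
    ∫⁻ z, (z : ℝ≥0∞) ∂(P 0) = ENNReal.ofReal (∑' j : ℕ, (j : ℝ) * a j) := by
  rw [lintegral_countable', ← tsum_natCast_mul_ofReal ha hsummable]
  simp only [hP0]

end MG1

theorem stmt19_general (a : ℕ → ℝ) (ha : ∀ j, 0 ≤ a j)
    (hsummable : Summable fun j => ((j : ℕ) : ℝ) * a j) (hρ : (∑' j : ℕ, (j : ℝ) * a j) < 1)
    (P : Kernel ℕ ℕ) [IsMarkovKernel P]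
    (hP0 : ∀ y : ℕ, P 0 {y} = ENNReal.ofReal (a y))
    (hP : ∀ x : ℕ, 1 ≤ x → ∀ y : ℕ,
      P x {y} = if x ≤ y + 1 then ENNReal.ofReal (a (y + 1 - x)) else 0)
    (μ : ℕ → Measure (ℕ → ℕ)) (hμ : IsMarkovChain P μ) :
    (∀ x : ℕ, 1 ≤ x →
      ∫⁻ ω, (ret ω : ℝ≥0∞) ∂(μ x) =
        ENNReal.ofReal ((x : ℝ) / (1 - ∑' j : ℕ, (j : ℝ) * a j))) ∧
    ∫⁻ ω, (ret ω : ℝ≥0∞) ∂(μ 0) =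
      ENNReal.ofReal (1 / (1 - ∑' j : ℕ, (j : ℝ) * a j)) := by
  have hK := isSkipFreeWithDrift_mg1 ha hsummable hP
  have hr : ENNReal.ofReal (∑' j : ℕ, (j : ℝ) * a j) < 1 := ENNReal.ofReal_lt_one.mpr hρ
  have hgap : ENNReal.ofReal (1 - ∑' j : ℕ, (j : ℝ) * a j) =
      1 - ENNReal.ofReal (∑' j : ℕ, (j : ℝ) * a j) := by
    rw [ENNReal.ofReal_sub 1 (tsum_nonneg fun j => mul_nonneg j.cast_nonneg (ha j)),
      ENNReal.ofReal_one]
  refine ⟨fun x hx => ?_, ?_⟩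
  · rw [ENNReal.ofReal_div_of_pos (sub_pos.mpr hρ), ENNReal.ofReal_natCast, hgap]
    exact hμ.lintegral_ret_of_one_le hK hr hx
  · rw [ENNReal.ofReal_div_of_pos (sub_pos.mpr hρ), ENNReal.ofReal_one, hgap]
    exact hμ.lintegral_ret_zero hK hr (lintegral_mg1_zero ha hsummable hP0)

/-- for the embedded M/G/1 queue with `ρ = Σ j·a_j < 1`,
`E_x[τ₀] = x/(1-ρ)` for `x ≥ 1`, and `E_0[τ₀] = 1/(1-ρ)`. -/
theorem stmt19 (a : ℕ → ℝ) (ha : ∀ j, 0 ≤ a j) (hsum : ∑' j, a j = 1)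
    (hsummable : Summable fun j => ((j : ℕ) : ℝ) * a j) (hρ : (∑' j : ℕ, (j : ℝ) * a j) < 1)
    (P : Kernel ℕ ℕ) [IsMarkovKernel P]
    (hP0 : ∀ y : ℕ, P 0 {y} = ENNReal.ofReal (a y))
    (hP : ∀ x : ℕ, 1 ≤ x → ∀ y : ℕ,
      P x {y} = if x ≤ y + 1 then ENNReal.ofReal (a (y + 1 - x)) else 0)
    (μ : ℕ → Measure (ℕ → ℕ)) (hμ : IsMarkovChain P μ) :
    (∀ x : ℕ, 1 ≤ x →
      ∫⁻ ω, (ret ω : ℝ≥0∞) ∂(μ x) =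
        ENNReal.ofReal ((x : ℝ) / (1 - ∑' j : ℕ, (j : ℝ) * a j))) ∧
    ∫⁻ ω, (ret ω : ℝ≥0∞) ∂(μ 0) =
      ENNReal.ofReal (1 / (1 - ∑' j : ℕ, (j : ℝ) * a j)) :=
  stmt19_general a ha hsummable hρ P hP0 hP μ hμ
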